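/- Define differential polynomials 𝒟_k by 𝒟_1 = h' + h² (i.e., 𝓛_{1/2} h) and 𝒟_k = 𝓛_k 𝒟_{k-1} = 𝒟_{k-1}' + 2k h 𝒟_{k-1} for k > 1, regarded as polynomials Z_{k+1} in variables y_1,…,y_{k+1} via y_j = h^{(j-1)}. Then the derivation 𝓛 = ∂/∂y_1 − Σ_s (s+1)s y_s ∂/∂y_{s+1} annihilates every 𝒟_k: 𝓛 𝒟_k = 0 for all k ≥ 1. -/
import Mathlib

open MvPolynomial

/-- The shift derivation Σ_s y_{s+1} ∂/∂y_s (variable `X i` represents y_{i+1}). -/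
noncomputable def shiftD (P : MvPolynomial ℕ ℝ) : MvPolynomial ℕ ℝ :=
  ∑ s ∈ P.vars, X (s + 1) * pderiv s P

/-- The operator 𝓛_k = Σ_s y_{s+1} ∂/∂y_s + 2k y_1 (multiplication). -/
noncomputable def Lop (k : ℝ) (P : MvPolynomial ℕ ℝ) : MvPolynomial ℕ ℝ :=
  shiftD P + C (2 * k) * X 0 * P

/-- The derivation 𝓛 with 𝓛 y_1 = 1 and 𝓛 y_{s+1} = −(s+1)s y_s for s ≥ 1. -/
noncomputable def Lder (P : MvPolynomial ℕ ℝ) : MvPolynomial ℕ ℝ :=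
  pderiv 0 P - ∑ s ∈ P.vars,
    if 1 ≤ s then (C (((s + 1) * s : ℕ) : ℝ) * X (s - 1) * pderiv s P) else 0

/-- The Euler-type operator ℰ = −2 Σ_s s y_s ∂/∂y_s. -/
noncomputable def Eop (P : MvPolynomial ℕ ℝ) : MvPolynomial ℕ ℝ :=
  - ∑ s ∈ P.vars, C ((2 * (s + 1) : ℕ) : ℝ) * X s * pderiv s P

/-- Z_2 = y_2 + y_1², Z_{k+1} = 𝓛_k Z_k; the differential polynomials 𝒟_k = Z_{k+1}. -/
noncomputable def Z : ℕ → MvPolynomial ℕ ℝ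
  | 0 => 0
  | 1 => 0
  | 2 => X 1 + X 0 ^ 2
  | (n + 3) => Lop ((n + 2 : ℕ) : ℝ) (Z (n + 2))

noncomputable def Dd : Derivation ℝ (MvPolynomial ℕ ℝ) (MvPolynomial ℕ ℝ) :=
  mkDerivation ℝ (fun s => X (s + 1))

noncomputable def Ldd : Derivation ℝ (MvPolynomial ℕ ℝ) (MvPolynomial ℕ ℝ) :=
  mkDerivation ℝ (fun s => if s = 0 then 1 else -(C (((s + 1) * s : ℕ) : ℝ) * X (s - 1)))

noncomputable def Ed : Derivation ℝ (MvPolynomial ℕ ℝ) (MvPolynomial ℕ ℝ) :=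
  mkDerivation ℝ (fun s => -(C ((2 * (s + 1) : ℕ) : ℝ) * X s))

lemma deriv_sum_apply {t : Finset ℕ} (E : ℕ → Derivation ℝ (MvPolynomial ℕ ℝ) (MvPolynomial ℕ ℝ))
    (P : MvPolynomial ℕ ℝ) : (∑ s ∈ t, E s) P = ∑ s ∈ t, E s P := by
  induction t using Finset.cons_induction with
  | empty => simp
  | cons a t ha ih =>
      rw [Finset.sum_cons, Finset.sum_cons, Derivation.add_apply, ih]

lemma derivation_apply_eq_sum (D : Derivation ℝ (MvPolynomial ℕ ℝ) (MvPolynomial ℕ ℝ))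
    (P : MvPolynomial ℕ ℝ) : D P = ∑ s ∈ P.vars, D (X s) * pderiv s P := by
  have h : D P = (∑ s ∈ P.vars, D (X s) • (pderiv s : Derivation ℝ (MvPolynomial ℕ ℝ) (MvPolynomial ℕ ℝ))) P := by
    apply derivation_eq_of_forall_mem_vars
    intro i hi
    rw [deriv_sum_apply]
    rw [Finset.sum_eq_single i]
    · simp
    · intro b _ hb
      simp [pderiv_X_of_ne (Ne.symm hb)]
    · intro h; exact absurd hi h
  rw [h, deriv_sum_apply]
  simp [smul_eq_mul]

lemma Dd_X (s : ℕ) : Dd (X s) = X (s + 1) := by rw [Dd, mkDerivation_X]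

lemma Ldd_X0 : Ldd (X 0) = 1 := by rw [Ldd, mkDerivation_X]; simp

lemma Ldd_X (s : ℕ) (hs : s ≠ 0) :
    Ldd (X s) = -(C (((s + 1) * s : ℕ) : ℝ) * X (s - 1)) := by
  rw [Ldd, mkDerivation_X]; simp [hs]

lemma Ed_X (s : ℕ) : Ed (X s) = -(C ((2 * (s + 1) : ℕ) : ℝ) * X s) := by rw [Ed, mkDerivation_X]

lemma shiftD_eq (P : MvPolynomial ℕ ℝ) : shiftD P = Dd P := by
  rw [derivation_apply_eq_sum Dd P, shiftD]
  refine Finset.sum_congr rfl fun s _ => by rw [Dd_X]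

lemma Lder_eq (P : MvPolynomial ℕ ℝ) : Lder P = Ldd P := by
  rw [derivation_apply_eq_sum Ldd P, Lder]
  have h : ∀ s ∈ P.vars, Ldd (X s) * pderiv s P
      = (if s = 0 then pderiv s P else 0)
        - (if 1 ≤ s then (C (((s + 1) * s : ℕ) : ℝ) * X (s - 1) * pderiv s P) else 0) := by
    intro s _
    rcases Nat.eq_zero_or_pos s with h | h
    · subst h; simp [Ldd_X0]
    · have hs : s ≠ 0 := Nat.pos_iff_ne_zero.mp h
      rw [Ldd_X s hs, if_neg hs, if_pos (Nat.one_le_iff_ne_zero.mpr hs)]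
      ring
  rw [Finset.sum_congr rfl h, Finset.sum_sub_distrib]
  congr 1
  rw [Finset.sum_ite_eq' P.vars 0 (fun s => pderiv s P)]
  by_cases h0 : 0 ∈ P.vars
  · simp [h0]
  · simp [h0, pderiv_eq_zero_of_notMem_vars h0]

lemma lop_eq (k : ℝ) (P : MvPolynomial ℕ ℝ) : Lop k P = Dd P + C (2 * k) * X 0 * P := by
  rw [Lop, shiftD_eq]

lemma Dd_C_mul (a : ℝ) (P : MvPolynomial ℕ ℝ) : Dd (C a * P) = C a * Dd P := by
  rw [C_mul', Derivation.map_smul, C_mul']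

lemma comb (a b c : ℝ) (m : ℕ) (h : a - b = c) :
    -(C a * X m) - -(C b * X m) = -(C c * X m : MvPolynomial ℕ ℝ) := by
  rw [← h, map_sub]; ring

lemma LD_comm : ⁅Ldd, Dd⁆ = Ed := by
  apply derivation_ext
  intro i
  rw [Derivation.commutator_apply, Ed_X, Dd_X]
  cases i with
  | zero =>
    rw [Ldd_X0, Derivation.map_one_eq_zero, Ldd_X 1 one_ne_zero]
    norm_num
  | succ n =>
    rw [Ldd_X (n + 1 + 1) (by omega), Ldd_X (n + 1) n.succ_ne_zero, map_neg, Dd_C_mul, Dd_X]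
    exact comb _ _ _ _ (by push_cast; ring)

lemma ED_comm : ⁅Ed, Dd⁆ = (-2 : ℝ) • Dd := by
  apply derivation_ext
  intro i
  rw [Derivation.commutator_apply, Derivation.smul_apply, Dd_X, Ed_X, Ed_X, map_neg, Dd_C_mul,
    Dd_X, smul_eq_C_mul]
  rw [comb ((2 * (i + 1 + 1) : ℕ) : ℝ) ((2 * (i + 1) : ℕ) : ℝ) 2 (i + 1) (by push_cast; ring),
    map_neg]
  ring

lemma Ldd_Lop (k : ℝ) (P : MvPolynomial ℕ ℝ) :
    Ldd (Lop k P) = Lop k (Ldd P) + Ed P + C (2 * k) * P := by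
  have h0 := congrArg (fun D : Derivation ℝ (MvPolynomial ℕ ℝ) (MvPolynomial ℕ ℝ) => D P) LD_comm
  simp only [Derivation.commutator_apply] at h0
  have h1 : Ldd (Dd P) = Dd (Ldd P) + Ed P := by rw [← h0]; ring
  have h2 : Ldd (C (2 * k) * X 0 * P) = C (2 * k) * P + C (2 * k) * X 0 * Ldd P := by
    rw [mul_assoc, C_mul', Derivation.map_smul, Derivation.leibniz, Ldd_X0]
    simp only [smul_eq_C_mul, smul_eq_mul, mul_one]
    ring
  rw [lop_eq, lop_eq, map_add, h1, h2]
  ring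

lemma Ed_Lop (k : ℝ) (P : MvPolynomial ℕ ℝ) :
    Ed (Lop k P) = Lop k (Ed P) - C 2 * Lop k P := by
  have h0 := congrArg (fun D : Derivation ℝ (MvPolynomial ℕ ℝ) (MvPolynomial ℕ ℝ) => D P) ED_comm
  simp only [Derivation.commutator_apply, Derivation.smul_apply, smul_eq_C_mul] at h0
  have h1 : Ed (Dd P) = Dd (Ed P) - C 2 * Dd P := by
    rw [← sub_eq_iff_eq_add'.mpr (sub_eq_iff_eq_add.mp h0)]
    rw [map_neg]
    ring
  have h2 : Ed (C (2 * k) * X 0 * P) = C (2 * k) * X 0 * Ed P - C 2 * (C (2 * k) * X 0 * P) := by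
    rw [mul_assoc, C_mul', Derivation.map_smul, Derivation.leibniz, Ed_X 0]
    have : ((2 * (0 + 1) : ℕ) : ℝ) = 2 := by norm_num
    rw [this]
    simp only [smul_eq_C_mul, smul_eq_mul]
    ring
  rw [lop_eq, lop_eq, map_add, h1, h2]
  ring

lemma lop_C_mul (k a : ℝ) (P : MvPolynomial ℕ ℝ) : Lop k (C a * P) = C a * Lop k P := by
  rw [lop_eq, lop_eq, Dd_C_mul]; ring

lemma lop_zero (k : ℝ) : Lop k 0 = 0 := by
  rw [lop_eq, map_zero]; ring

lemma Ed_Z (n : ℕ) : Ed (Z (n + 2)) = C (-(2 * ((n : ℝ) + 2))) * Z (n + 2) := by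
  induction n with
  | zero =>
    rw [show Z (0 + 2) = X 1 + X 0 ^ 2 from rfl]
    rw [map_add, Ed_X 1, pow_two, Derivation.leibniz, Ed_X 0]
    simp only [smul_eq_mul]
    push_cast
    rw [map_neg]
    norm_num
    have h4 : (C 4 : MvPolynomial ℕ ℝ) = C 2 + C 2 := by rw [← map_add]; norm_num
    linear_combination (X 0 * X 0 : MvPolynomial ℕ ℝ) * h4
  | succ n ih =>
    show Ed (Lop ((n + 2 : ℕ) : ℝ) (Z (n + 2))) = _
    rw [Ed_Lop, ih, lop_C_mul]
    rw [show Lop ((n + 2 : ℕ) : ℝ) (Z (n + 2)) = Z (n + 3) from rfl]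
    rw [← sub_mul, ← map_sub]
    congr 2
    push_cast
    ring

lemma Ldd_Z (n : ℕ) : Ldd (Z (n + 2)) = 0 := by
  induction n with
  | zero =>
    show Ldd (X 1 + X 0 ^ 2) = 0
    rw [map_add, Ldd_X 1 one_ne_zero, pow_two, Derivation.leibniz, Ldd_X0]
    simp only [smul_eq_mul, mul_one]
    norm_num
    rw [show (C 2 : MvPolynomial ℕ ℝ) = 2 from map_ofNat C 2]
    ring
  | succ n ih =>
    show Ldd (Lop ((n + 2 : ℕ) : ℝ) (Z (n + 2))) = 0
    rw [Ldd_Lop, ih, lop_zero, Ed_Z, zero_add, ← add_mul, ← map_add]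
    have : -(2 * ((n : ℝ) + 2)) + 2 * ((n + 2 : ℕ) : ℝ) = 0 := by push_cast; ring
    rw [this, map_zero, zero_mul]

/-- The derivation 𝓛 annihilates every differential polynomial 𝒟_k = Z_{k+1}. -/
theorem Lder_annihilates_D (k : ℕ) (hk : 1 ≤ k) : Lder (Z (k + 1)) = 0 := by
  obtain ⟨n, rfl⟩ := Nat.exists_eq_add_of_le hk
  rw [Lder_eq, show 1 + n + 1 = n + 2 by omega]
  exact Ldd_Z n
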